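/- arXiv:2201.07974 — 2 statements merged into one kernel-verified Lean document; each statement's English description precedes it below -/
import Mathlib

section
/- Let n ≥ 3. For every regular n-gon with center c, circumradius R > 0 and orientation θ, and every point M in its plane with L = |M − c|, one has 3·(S_n^{(2)})² − 2·S_n^{(4)} = (R² − L²)²; in particular 3·(S_n^{(2)})² − 2·S_n^{(4)} ≥ 0, with equality if and only if L = R (i.e. M lies on the circumcircle). -/
open Complex Real Finset

open ComplexConjugate

/-! With `ζ = exp (2πi/n)` the vertices are `c + R u ζ^k` for a unit `u`, so with
`a = conj (M - c) u` the squared distances are `d_k² = A - 2R Re (a ζ^k)`, where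
`A = L² + R²` and `‖a‖ = L`. For `n ≥ 3` both `ζ` and `ζ²` are nontrivial `n`-th roots of
unity, so `Re (a ζ^k)` has mean `0` and mean square `L²/2`. Hence `S₂ = A` and
`S₄ = A² + 2R²L²`, and `3 S₂² - 2 S₄ = A² - 4R²L² = (R² - L²)²`. -/

theorem IsPrimitiveRoot.sum_range_pow_pow_eq_zero {R : Type*} [CommRing R] [IsDomain R]
    {ζ : R} {n j : ℕ} (hζ : IsPrimitiveRoot ζ n) (hj : ¬ n ∣ j) :
    ∑ k ∈ range n, (ζ ^ j) ^ k = 0 := by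
  have hne : ζ ^ j - 1 ≠ 0 := sub_ne_zero.mpr fun h => hj ((hζ.pow_eq_one_iff_dvd j).mp h)
  have hmul : (∑ k ∈ range n, (ζ ^ j) ^ k) * (ζ ^ j - 1) = 0 := by
    rw [geom_sum_mul, ← pow_mul, mul_comm, pow_mul, hζ.pow_eq_one, one_pow, sub_self]
  exact (mul_eq_zero.mp hmul).resolve_right hne

namespace Complex

theorem re_sq_eq_norm_sq_add_re_sq_div_two (z : ℂ) : z.re ^ 2 = (‖z‖ ^ 2 + (z ^ 2).re) / 2 := by
  rw [Complex.sq_norm, normSq_apply, sq z, mul_re]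
  ring

theorem norm_sub_ofReal_mul_sq (w : ℂ) {z : ℂ} (hz : ‖z‖ = 1) (R : ℝ) :
    ‖w - R * z‖ ^ 2 = ‖w‖ ^ 2 + R ^ 2 - 2 * R * (conj w * z).re := by
  have hconj : (w * conj (R * z)).re = R * (conj w * z).re := by
    rw [← conj_re, map_mul, conj_conj, mul_left_comm, re_ofReal_mul]
  rw [Complex.sq_norm, Complex.sq_norm, normSq_sub, hconj, normSq_mul, normSq_ofReal,
    ← Complex.sq_norm z, hz]
  ring

end Complex

namespace IsPrimitiveRoot

variable {ζ : ℂ} {n : ℕ}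

theorem sum_re_mul_pow (hζ : IsPrimitiveRoot ζ n) (hn : 2 ≤ n) (a : ℂ) :
    ∑ k ∈ range n, (a * ζ ^ k).re = 0 := by
  rw [← re_sum, ← mul_sum, hζ.geom_sum_eq_zero hn, mul_zero, zero_re]

theorem sum_re_mul_pow_sq (hζ : IsPrimitiveRoot ζ n) (hn : 3 ≤ n) (a : ℂ) :
    ∑ k ∈ range n, (a * ζ ^ k).re ^ 2 = n * ‖a‖ ^ 2 / 2 := by
  have hsq : ∑ k ∈ range n, ((a * ζ ^ k) ^ 2).re = 0 := by
    have h2 : ¬ n ∣ 2 := fun h => by have := Nat.le_of_dvd two_pos h; omega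
    simp_rw [mul_pow, ← pow_mul, mul_comm _ 2, pow_mul]
    rw [← re_sum, ← mul_sum, hζ.sum_range_pow_pow_eq_zero h2, mul_zero, zero_re]
  have hnorm (k : ℕ) : ‖a * ζ ^ k‖ = ‖a‖ := by
    rw [norm_mul, norm_pow, hζ.norm'_eq_one (by omega), one_pow, mul_one]
  simp_rw [re_sq_eq_norm_sq_add_re_sq_div_two, hnorm, ← sum_div, sum_add_distrib, hsq, sum_const,
    card_range, nsmul_eq_mul]
  ring

end IsPrimitiveRoot

theorem exp_I_mul_two_pi_mul_div_add (n k : ℕ) (θ : ℝ) :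
    exp (I * ((2 * π * k / n + θ : ℝ) : ℂ)) = exp (θ * I) * exp (2 * π * I / n) ^ k := by
  rw [← Complex.exp_nat_mul, ← Complex.exp_add]
  push_cast
  ring_nf

noncomputable def regularPolygonVertex (n : ℕ) (c : ℂ) (R θ : ℝ) (k : ℕ) : ℂ :=
  c + R * exp (I * ((2 * π * k / n + θ : ℝ) : ℂ))

section RegularPolygon

variable {n : ℕ} (c M : ℂ) (R θ : ℝ)

theorem norm_sub_regularPolygonVertex_sq (k : ℕ) :
    ‖M - regularPolygonVertex n c R θ k‖ ^ 2 =
      ‖M - c‖ ^ 2 + R ^ 2 - 2 * R * (conj (M - c) * exp (θ * I) * exp (2 * π * I / n) ^ k).re := by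
  have hunit : ‖exp (θ * I) * exp (2 * π * I / n) ^ k‖ = 1 := by
    rw [← exp_I_mul_two_pi_mul_div_add, mul_comm, norm_exp_ofReal_mul_I]
  rw [regularPolygonVertex, sub_add_eq_sub_sub, exp_I_mul_two_pi_mul_div_add,
    norm_sub_ofReal_mul_sq _ hunit, mul_assoc (conj (M - c)), mul_assoc]

theorem average_norm_sub_regularPolygonVertex_sq (hn : 2 ≤ n) :
    (1 / n : ℝ) * ∑ k ∈ range n, ‖M - regularPolygonVertex n c R θ k‖ ^ 2 =
      ‖M - c‖ ^ 2 + R ^ 2 := by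
  have hζ := isPrimitiveRoot_exp n (by omega)
  simp_rw [norm_sub_regularPolygonVertex_sq, sum_sub_distrib, ← mul_sum, hζ.sum_re_mul_pow hn,
    sum_const, card_range, nsmul_eq_mul]
  field_simp
  ring

theorem average_norm_sub_regularPolygonVertex_pow_four (hn : 3 ≤ n) :
    (1 / n : ℝ) * ∑ k ∈ range n, ‖M - regularPolygonVertex n c R θ k‖ ^ 4 =
      (‖M - c‖ ^ 2 + R ^ 2) ^ 2 + 2 * R ^ 2 * ‖M - c‖ ^ 2 := by
  have hζ := isPrimitiveRoot_exp n (by omega)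
  set a := conj (M - c) * exp (θ * I)
  have ha : ‖a‖ = ‖M - c‖ := by rw [norm_mul, RCLike.norm_conj, norm_exp_ofReal_mul_I, mul_one]
  have hexpand (k : ℕ) : ‖M - regularPolygonVertex n c R θ k‖ ^ 4 =
      (‖M - c‖ ^ 2 + R ^ 2) ^ 2 - 4 * R * (‖M - c‖ ^ 2 + R ^ 2) * (a * exp (2 * π * I / n) ^ k).re
        + 4 * R ^ 2 * (a * exp (2 * π * I / n) ^ k).re ^ 2 := by
    rw [show 4 = 2 * 2 by rfl, pow_mul, norm_sub_regularPolygonVertex_sq]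
    ring
  simp_rw [hexpand, sum_add_distrib, sum_sub_distrib, ← mul_sum, hζ.sum_re_mul_pow (by omega),
    hζ.sum_re_mul_pow_sq hn, ha, sum_const, card_range, nsmul_eq_mul]
  field_simp
  ring

end RegularPolygon

theorem three_S2_sq_sub_two_S4 (n : ℕ) (hn : 3 ≤ n)
    (c M : ℂ) (R θ : ℝ) (hR : 0 < R) (L : ℝ) (hL : L = ‖M - c‖)
    (S2 S4 : ℝ)
    (hS2 : S2 = (1 / n : ℝ) * ∑ k ∈ Finset.range n,
        ‖M - (c + R * Complex.exp (Complex.I * ((2 * π * k / n + θ : ℝ) : ℂ)))‖ ^ 2)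
    (hS4 : S4 = (1 / n : ℝ) * ∑ k ∈ Finset.range n,
        ‖M - (c + R * Complex.exp (Complex.I * ((2 * π * k / n + θ : ℝ) : ℂ)))‖ ^ 4) :
    3 * S2 ^ 2 - 2 * S4 = (R ^ 2 - L ^ 2) ^ 2
      ∧ 0 ≤ 3 * S2 ^ 2 - 2 * S4
      ∧ (3 * S2 ^ 2 - 2 * S4 = 0 ↔ L = R) := by
  have hS2' : S2 = ‖M - c‖ ^ 2 + R ^ 2 :=
    hS2.trans (average_norm_sub_regularPolygonVertex_sq c M R θ (by omega))
  have hS4' : S4 = (‖M - c‖ ^ 2 + R ^ 2) ^ 2 + 2 * R ^ 2 * ‖M - c‖ ^ 2 :=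
    hS4.trans (average_norm_sub_regularPolygonVertex_pow_four c M R θ hn)
  have hidentity : 3 * S2 ^ 2 - 2 * S4 = (R ^ 2 - L ^ 2) ^ 2 := by
    rw [hS2', hS4', hL]
    ring
  refine ⟨hidentity, hidentity ▸ sq_nonneg _, ?_⟩
  rw [hidentity, sq_eq_zero_iff, sub_eq_zero, sq_eq_sq₀ hR.le (hL ▸ norm_nonneg _), eq_comm]
end

section
/- Let n ≥ 3. Suppose a regular n-gon has center c₁, circumradius R₁ > 0, and the point M lies on its circumcircle, i.e. |M − c₁| = R₁. If another regular n-gon with center c₂ and circumradius R₂ > 0 has the same multiset of distances from M to its vertices, then R₂ = R₁ and |M − c₂| = R₂; i.e. when M lies on the circumcircle there is no non-congruent regular n-gon with the same distances. -/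
/-!
For unit vectors `u₀, …, u_{n-1}` with `∑ uₖ = 0` and `∑ uₖ² = 0` (the vertex directions of a
regular `n`-gon, `n ≥ 3`), the squared distances `dₖ² = ‖w‖² + R² - 2R·Re (w ūₖ)` from a point at
offset `w` from the centre have power sums `∑ dₖ² = n (‖w‖² + R²)` and
`∑ dₖ⁴ = n ((‖w‖² + R²)² + 2 R² ‖w‖²)`. So the multiset of distances determines the sum and the
product of `‖w‖²` and `R²`. On the circumcircle these two numbers are equal, a double root of the
quadratic they solve, so for any polygon with the same distances `‖w‖²` and `R²` both equal it.
-/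

open Complex ComplexConjugate Real Finset

theorem Finset.sum_comp_eq_of_map_val_eq {ι β M : Type*} [AddCommMonoid M] {s : Finset ι}
    {f g : ι → β} (h : s.val.map f = s.val.map g) (φ : β → M) :
    ∑ k ∈ s, φ (f k) = ∑ k ∈ s, φ (g k) := by
  have := congrArg (fun t => (t.map φ).sum) h
  rwa [Multiset.map_map, Multiset.map_map] at this

theorem eq_and_eq_of_add_eq_two_mul_of_mul_eq_sq {a b c : ℝ} (hsum : a + b = 2 * c)
    (hprod : a * b = c ^ 2) : a = c ∧ b = c := by
  have hab : (a - b) ^ 2 = 0 := by linear_combination (a + b + 2 * c) * hsum - 4 * hprod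
  have : a = b := sub_eq_zero.mp (pow_eq_zero_iff two_ne_zero |>.mp hab)
  constructor <;> linarith

theorem Complex.re_sq_eq (z : ℂ) : z.re ^ 2 = ((z ^ 2).re + ‖z‖ ^ 2) / 2 := by
  rw [Complex.sq_norm, normSq_apply, sq z, mul_re]
  ring

theorem norm_sub_add_mul_sq_of_norm_eq_one (z c : ℂ) (R : ℝ) {v : ℂ} (hv : ‖v‖ = 1) :
    ‖z - (c + R * v)‖ ^ 2 = ‖z - c‖ ^ 2 + R ^ 2 - 2 * R * ((z - c) * conj v).re := by
  rw [show z - (c + R * v) = (z - c) - R * v by ring, Complex.sq_norm, Complex.sq_norm,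
    normSq_sub, normSq_mul, normSq_ofReal, ← Complex.sq_norm v, hv, map_mul, conj_ofReal,
    mul_left_comm, re_ofReal_mul]
  ring

section BalancedUnitVectors

variable {ι : Type*} {s : Finset ι} {u : ι → ℂ}

theorem sum_re_mul_conj_eq_zero (h₁ : ∑ k ∈ s, u k = 0) (w : ℂ) :
    ∑ k ∈ s, (w * conj (u k)).re = 0 := by
  rw [← re_sum, ← mul_sum, ← map_sum, h₁, map_zero, mul_zero, zero_re]

theorem sum_re_mul_conj_sq (hu : ∀ k ∈ s, ‖u k‖ = 1) (h₂ : ∑ k ∈ s, u k ^ 2 = 0) (w : ℂ) :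
    ∑ k ∈ s, (w * conj (u k)).re ^ 2 = #s * ‖w‖ ^ 2 / 2 := by
  have hsq : ∑ k ∈ s, (w * conj (u k)) ^ 2 = 0 := by
    simp_rw [mul_pow, ← map_pow, ← mul_sum, ← map_sum, h₂, map_zero, mul_zero]
  have hnorm : ∀ k ∈ s, ‖w * conj (u k)‖ = ‖w‖ := fun k hk => by
    rw [norm_mul, RCLike.norm_conj, hu k hk, mul_one]
  rw [sum_congr rfl fun k hk => by rw [Complex.re_sq_eq, hnorm k hk], ← sum_div,
    sum_add_distrib, ← re_sum, hsq, zero_re, zero_add, sum_const, nsmul_eq_mul]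

theorem sum_norm_sub_add_mul_sq (hu : ∀ k ∈ s, ‖u k‖ = 1) (h₁ : ∑ k ∈ s, u k = 0)
    (z c : ℂ) (R : ℝ) :
    ∑ k ∈ s, ‖z - (c + R * u k)‖ ^ 2 = #s * (‖z - c‖ ^ 2 + R ^ 2) := by
  rw [sum_congr rfl fun k hk => norm_sub_add_mul_sq_of_norm_eq_one z c R (hu k hk),
    sum_sub_distrib, ← mul_sum, sum_re_mul_conj_eq_zero h₁, sum_const, nsmul_eq_mul]
  ring

theorem sum_norm_sub_add_mul_pow_four (hu : ∀ k ∈ s, ‖u k‖ = 1) (h₁ : ∑ k ∈ s, u k = 0)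
    (h₂ : ∑ k ∈ s, u k ^ 2 = 0) (z c : ℂ) (R : ℝ) :
    ∑ k ∈ s, ‖z - (c + R * u k)‖ ^ 4
      = #s * ((‖z - c‖ ^ 2 + R ^ 2) ^ 2 + 2 * R ^ 2 * ‖z - c‖ ^ 2) := by
  set A := ‖z - c‖ ^ 2 + R ^ 2
  have hexpand : ∀ k ∈ s, ‖z - (c + R * u k)‖ ^ 4
      = A ^ 2 - 4 * A * R * ((z - c) * conj (u k)).re
        + 4 * R ^ 2 * ((z - c) * conj (u k)).re ^ 2 := fun k hk => by
    rw [show (4 : ℕ) = 2 * 2 from rfl, pow_mul,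
      norm_sub_add_mul_sq_of_norm_eq_one z c R (hu k hk)]
    ring
  rw [sum_congr rfl hexpand, sum_add_distrib, sum_sub_distrib, ← mul_sum, ← mul_sum,
    sum_re_mul_conj_eq_zero h₁, sum_re_mul_conj_sq hu h₂, sum_const, nsmul_eq_mul]
  ring

end BalancedUnitVectors

section RegularPolygon

theorem sum_range_exp_pow_eq_zero {n j : ℕ} (hj : ¬ n ∣ j) (θ : ℝ) :
    ∑ k ∈ range n, exp (I * ((2 * π * k / n + θ : ℝ) : ℂ)) ^ j = 0 := by
  rcases eq_or_ne n 0 with rfl | hn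
  · simp
  set ζ := exp (2 * π * I / n)
  have hζ : IsPrimitiveRoot ζ n := isPrimitiveRoot_exp n hn
  have hterm : ∀ k : ℕ, exp (I * ((2 * π * k / n + θ : ℝ) : ℂ)) ^ j
      = exp (I * θ) ^ j * (ζ ^ j) ^ k := fun k => by
    rw [← pow_mul, mul_comm j k, pow_mul, ← mul_pow]
    congr 1
    rw [← Complex.exp_nat_mul, ← Complex.exp_add]
    congr 1
    push_cast
    field_simp
    ring
  have hζj : (ζ ^ j) ^ n = 1 := by rw [← pow_mul, mul_comm, pow_mul, hζ.pow_eq_one, one_pow]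
  have hζj_ne : ζ ^ j ≠ 1 := fun h => hj ((hζ.pow_eq_one_iff_dvd j).mp h)
  rw [sum_congr rfl fun k _ => hterm k, ← mul_sum, geom_sum_eq hζj_ne, hζj, sub_self,
    zero_div, mul_zero]

variable {n : ℕ} (M c : ℂ) (R θ : ℝ)

theorem sum_norm_sub_regularPolygon_sq (hn : n ≠ 1) :
    ∑ k ∈ range n, ‖M - (c + R * exp (I * ((2 * π * k / n + θ : ℝ) : ℂ)))‖ ^ 2
      = n * (‖M - c‖ ^ 2 + R ^ 2) := by
  have h₁ := sum_range_exp_pow_eq_zero (Nat.dvd_one.not.mpr hn) θ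
  simp only [pow_one] at h₁
  have := sum_norm_sub_add_mul_sq (fun k _ => norm_exp_I_mul_ofReal _) h₁ M c R
  rwa [card_range] at this

theorem sum_norm_sub_regularPolygon_pow_four (hn₁ : n ≠ 1) (hn₂ : n ≠ 2) :
    ∑ k ∈ range n, ‖M - (c + R * exp (I * ((2 * π * k / n + θ : ℝ) : ℂ)))‖ ^ 4
      = n * ((‖M - c‖ ^ 2 + R ^ 2) ^ 2 + 2 * R ^ 2 * ‖M - c‖ ^ 2) := by
  have h₁ := sum_range_exp_pow_eq_zero (Nat.dvd_one.not.mpr hn₁) θ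
  simp only [pow_one] at h₁
  have h₂ := sum_range_exp_pow_eq_zero (j := 2)
    (by rw [Nat.dvd_prime Nat.prime_two]; exact not_or_intro hn₁ hn₂) θ
  have := sum_norm_sub_add_mul_pow_four (fun k _ => norm_exp_I_mul_ofReal _) h₁ h₂ M c R
  rwa [card_range] at this

end RegularPolygon

theorem on_circumcircle_no_noncongruent_general (n : ℕ) (hn : 3 ≤ n)
    (c₁ c₂ M : ℂ) (R₁ R₂ α β : ℝ) (hR₂ : 0 < R₂)
    (hM : ‖M - c₁‖ = R₁)
    (hdist : (Finset.range n).val.map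
        (fun k => ‖M - (c₂ + R₂ * Complex.exp (Complex.I * ((2 * π * k / n + β : ℝ) : ℂ)))‖)
      = (Finset.range n).val.map
          (fun k => ‖M - (c₁ + R₁ * Complex.exp (Complex.I * ((2 * π * k / n + α : ℝ) : ℂ)))‖)) :
    R₂ = R₁ ∧ ‖M - c₂‖ = R₂ := by
  have hn₀ : (n : ℝ) ≠ 0 := by positivity
  -- `k` in `hdist` is real: `range n` is coerced to a multiset of reals through the monad.
  simp only [Multiset.pure_def, Multiset.bind_def, Multiset.bind_singleton, Multiset.map_map,
    Function.comp_def] at hdist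
  have hsq := sum_comp_eq_of_map_val_eq hdist (· ^ 2)
  have hquartic := sum_comp_eq_of_map_val_eq hdist (· ^ 4)
  simp only [sum_norm_sub_regularPolygon_sq M _ _ _ (by omega : n ≠ 1), hM] at hsq
  simp only [sum_norm_sub_regularPolygon_pow_four M _ _ _ (by omega : n ≠ 1) (by omega : n ≠ 2),
    hM] at hquartic
  have hsum : ‖M - c₂‖ ^ 2 + R₂ ^ 2 = 2 * R₁ ^ 2 := by
    linear_combination (mul_left_cancel₀ hn₀ hsq)
  have hprod : ‖M - c₂‖ ^ 2 * R₂ ^ 2 = (R₁ ^ 2) ^ 2 := by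
    linear_combination
      (mul_left_cancel₀ hn₀ hquartic - (‖M - c₂‖ ^ 2 + R₂ ^ 2 + 2 * R₁ ^ 2) * hsum) / 2
  obtain ⟨hw, hR⟩ := eq_and_eq_of_add_eq_two_mul_of_mul_eq_sq hsum hprod
  have hR₁ : 0 ≤ R₁ := hM ▸ norm_nonneg _
  exact ⟨(sq_eq_sq₀ hR₂.le hR₁).mp hR, (sq_eq_sq₀ (norm_nonneg _) hR₂.le).mp (hw.trans hR.symm)⟩

theorem on_circumcircle_no_noncongruent (n : ℕ) (hn : 3 ≤ n)
    (c₁ c₂ M : ℂ) (R₁ R₂ α β : ℝ) (hR₁ : 0 < R₁) (hR₂ : 0 < R₂)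
    (hM : ‖M - c₁‖ = R₁)
    (hdist : (Finset.range n).val.map
        (fun k => ‖M - (c₂ + R₂ * Complex.exp (Complex.I * ((2 * π * k / n + β : ℝ) : ℂ)))‖)
      = (Finset.range n).val.map
          (fun k => ‖M - (c₁ + R₁ * Complex.exp (Complex.I * ((2 * π * k / n + α : ℝ) : ℂ)))‖)) :
    R₂ = R₁ ∧ ‖M - c₂‖ = R₂ :=
  on_circumcircle_no_noncongruent_general n hn c₁ c₂ M R₁ R₂ α β hR₂ hM hdist
end
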